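/- Let ρ, ξ be density matrices on a finite-dimensional Hilbert space H, and let |ψ⟩, |φ⟩ ∈ H ⊗ K be arbitrary purifications of ρ and ξ respectively. Then ‖tr_H(|ψ⟩⟨φ|)‖_tr = F(ρ, ξ). -/

import Mathlib

open scoped ComplexOrder Matrix

/-- Matrix square root: the positive semidefinite square root of a PSD matrix,
with junk value 0 for non-PSD matrices. -/
noncomputable def sqrtM {i : Type} [Fintype i] [DecidableEq i] (A : Matrix i i Complex) :
    Matrix i i Complex :=
  letI := Classical.propDecidable A.PosSemidef
  if h : A.PosSemidef then
    h.1.eigenvectorUnitary.1 * Matrix.diagonal ((↑) ∘ (√·) ∘ h.1.eigenvalues) *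
      (star h.1.eigenvectorUnitary : Matrix i i Complex)
  else 0

/-- Trace norm: trace of the square root of X-dagger-X (sum of singular values). -/
noncomputable def traceNorm {i : Type} [Fintype i] [DecidableEq i] (X : Matrix i i Complex) : Real :=
  ((sqrtM (Xᴴ * X)).trace).re

/-- Fidelity F(rho, xi) = trace of the square root of (sqrt rho * xi * sqrt rho). -/
noncomputable def fidelity {i : Type} [Fintype i] [DecidableEq i] (ρ ξ : Matrix i i Complex) : Real :=
  ((sqrtM (sqrtM ρ * ξ * sqrtM ρ)).trace).re

/-- Outer product of vectors. -/
noncomputable def outer {i : Type} (ψ φ : i → Complex) : Matrix i i Complex :=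
  Matrix.of fun p q => ψ p * star (φ q)

/-- Partial trace over the first tensor factor. -/
noncomputable def ptraceFst {α β : Type} [Fintype α] (X : Matrix (α × β) (α × β) Complex) :
    Matrix β β Complex :=
  Matrix.of fun i j => ∑ a : α, X (a, i) (a, j)

/-- Partial trace over the second tensor factor. -/
noncomputable def ptraceSnd {α β : Type} [Fintype β] (X : Matrix (α × β) (α × β) Complex) :
    Matrix α α Complex :=
  Matrix.of fun i j => ∑ b : β, X (i, b) (j, b)

/-- The extension of a map on matrices by the identity on an auxiliary space. -/
noncomputable def extendId {i k : Type} (f : Matrix i i Complex → Matrix k k Complex)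
    (α : Type) (X : Matrix (i × α) (i × α) Complex) : Matrix (k × α) (k × α) Complex :=
  Matrix.of fun p q => f (Matrix.of fun a b => X (a, p.2) (b, q.2)) p.1 q.1

/-- Complete positivity: all extensions by an identity map PSD matrices to PSD matrices. -/
def IsCompletelyPositive {i k : Type} [Fintype i] [DecidableEq i] [Fintype k] [DecidableEq k]
    (f : Matrix i i Complex → Matrix k k Complex) : Prop :=
  ∀ (r : ℕ) (X : Matrix (i × Fin r) (i × Fin r) Complex), X.PosSemidef →
    (extendId f (Fin r) X).PosSemidef

/-- Trace preservation. -/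
def IsTracePreserving {i k : Type} [Fintype i] [Fintype k]
    (f : Matrix i i Complex → Matrix k k Complex) : Prop :=
  ∀ X : Matrix i i Complex, (f X).trace = X.trace

/-- The diamond norm: the supremum of the trace norms of (f tensor I)(X) over all X of
trace norm one, with the identity on an auxiliary space of the same dimension as the input. -/
noncomputable def dnorm {i k : Type} [Fintype i] [DecidableEq i] [Fintype k] [DecidableEq k]
    (f : Matrix i i Complex → Matrix k k Complex) : Real :=
  sSup {t : Real | ∃ X : Matrix (i × i) (i × i) Complex,
    traceNorm X = 1 ∧ t = traceNorm (extendId f i X)}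

/-!
Write ψ and φ as coefficient matrices A, B : K → H, so that ρ = AA*, ξ = BB* and the partial
trace of |ψ⟩⟨φ| over H is (B*A)ᵀ. With S = √ρ, its trace norm is tr √(((SB)*(SB))ᵀ), while
F(ρ, ξ) = tr √((SB)(SB)*). Now tr √P is the sum of the square roots of the eigenvalues of P, and
XY and YX have the same characteristic polynomial up to a power of X, hence the same nonzero
eigenvalues.
-/

open Polynomial Matrix
open scoped MatrixOrder

section
variable {α : Type} [Fintype α] [DecidableEq α] {A : Matrix α α ℂ}

lemma sqrtM_eq_cfc (hA : A.PosSemidef) : sqrtM A = cfc Real.sqrt A := by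
  rw [sqrtM, dif_pos hA, hA.1.cfc_eq, IsHermitian.cfc, Unitary.conjStarAlgAut_apply]
  rfl

lemma sqrtM_eq_sqrt (hA : A.PosSemidef) : sqrtM A = CFC.sqrt A := by
  rw [sqrtM_eq_cfc hA, CFC.sqrt_eq_cfc, cfc_nnreal_eq_real _ A]
  refine cfc_congr fun x _ => ?_
  rcases le_total x 0 with hx | hx <;> simp [hx, Real.sqrt_eq_zero_of_nonpos]

lemma Matrix.IsHermitian.trace_cfc (hA : A.IsHermitian) (f : ℝ → ℝ) :
    (cfc f A).trace = ∑ i, (f (hA.eigenvalues i) : ℂ) := by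
  rw [hA.cfc_eq, IsHermitian.cfc, Unitary.conjStarAlgAut_apply, trace_mul_cycle,
    Unitary.star_mul_self_of_mem hA.eigenvectorUnitary.2, one_mul, trace_diagonal]
  rfl

lemma re_trace_sqrtM (hA : A.PosSemidef) :
    (sqrtM A).trace.re = ∑ i, √(hA.1.eigenvalues i) := by
  rw [sqrtM_eq_cfc hA, hA.1.trace_cfc, Complex.re_sum]
  simp

lemma Matrix.IsHermitian.sum_sqrt_eigenvalues_eq_sum_roots (hA : A.IsHermitian) (k : ℕ) :
    ∑ i, √(hA.eigenvalues i) = (((X ^ k * A.charpoly).roots).map fun z : ℂ => √z.re).sum := by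
  rw [roots_mul (mul_ne_zero (pow_ne_zero _ X_ne_zero) A.charpoly_monic.ne_zero), roots_pow,
    roots_X, hA.roots_charpoly_eq_eigenvalues, Multiset.map_add, Multiset.sum_add,
    Multiset.map_nsmul, Multiset.map_singleton, Multiset.map_map]
  simp only [Function.comp_apply, Complex.zero_re, Real.sqrt_zero,
    Multiset.sum_nsmul, Multiset.sum_singleton, smul_zero, zero_add]
  rfl
end

section
variable {α β : Type} [Fintype α] [DecidableEq α] [Fintype β] [DecidableEq β]

lemma re_trace_sqrtM_eq_of_charpoly {P : Matrix α α ℂ} {Q : Matrix β β ℂ} (hP : P.PosSemidef)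
    (hQ : Q.PosSemidef) (h : X ^ Fintype.card β * P.charpoly = X ^ Fintype.card α * Q.charpoly) :
    (sqrtM P).trace.re = (sqrtM Q).trace.re := by
  rw [re_trace_sqrtM hP, re_trace_sqrtM hQ, hP.1.sum_sqrt_eigenvalues_eq_sum_roots,
    hQ.1.sum_sqrt_eigenvalues_eq_sum_roots, h]

lemma re_trace_sqrtM_transpose {P : Matrix α α ℂ} (hP : P.PosSemidef) :
    (sqrtM Pᵀ).trace.re = (sqrtM P).trace.re :=
  re_trace_sqrtM_eq_of_charpoly hP.transpose hP (by rw [charpoly_transpose])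

lemma re_trace_sqrtM_conjTranspose_mul_self (Y : Matrix α β ℂ) :
    (sqrtM (Yᴴ * Y)).trace.re = (sqrtM (Y * Yᴴ)).trace.re :=
  re_trace_sqrtM_eq_of_charpoly (posSemidef_conjTranspose_mul_self Y)
    (posSemidef_self_mul_conjTranspose Y) (charpoly_mul_comm' Yᴴ Y)

lemma traceNorm_transpose_conjTranspose_mul_eq_fidelity (A B : Matrix α β ℂ) :
    traceNorm (Bᴴ * A)ᵀ = fidelity (A * Aᴴ) (B * Bᴴ) := by
  have hAA := posSemidef_self_mul_conjTranspose A
  rw [traceNorm, fidelity, sqrtM_eq_sqrt hAA]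
  set S := CFC.sqrt (A * Aᴴ)
  have hSS : S * S = A * Aᴴ := CFC.sqrt_mul_sqrt_self _ hAA.nonneg
  have hSh : Sᴴ = S := (CFC.sqrt_nonneg _).posSemidef.1
  have hnorm : ((Bᴴ * A)ᵀ)ᴴ * (Bᴴ * A)ᵀ = ((S * B)ᴴ * (S * B))ᵀ := by
    rw [conjTranspose_transpose_eq_transpose_conjTranspose, ← transpose_mul, conjTranspose_mul,
      conjTranspose_mul, conjTranspose_conjTranspose, hSh, Matrix.mul_assoc, ← Matrix.mul_assoc A, ← hSS]
    simp only [Matrix.mul_assoc]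
  have hfid : S * (B * Bᴴ) * S = (S * B) * (S * B)ᴴ := by
    rw [conjTranspose_mul, hSh]
    simp only [Matrix.mul_assoc]
  rw [hnorm, hfid, re_trace_sqrtM_transpose (posSemidef_conjTranspose_mul_self _),
    re_trace_sqrtM_conjTranspose_mul_self]
end

lemma ptraceSnd_outer {α β : Type} [Fintype β] (ψ φ : α × β → ℂ) :
    ptraceSnd (outer ψ φ) = of (Function.curry ψ) * (of (Function.curry φ))ᴴ := by
  ext a b
  simp [ptraceSnd, outer, mul_apply]

lemma ptraceFst_outer {α β : Type} [Fintype α] (ψ φ : α × β → ℂ) :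
    ptraceFst (outer ψ φ) = ((of (Function.curry φ))ᴴ * of (Function.curry ψ))ᵀ := by
  ext i j
  simp [ptraceFst, outer, mul_apply, mul_comm]

theorem traceNorm_ptrace_outer_eq_fidelity_general {n m : ℕ} (ρ ξ : Matrix (Fin n) (Fin n) Complex)
    (ψ φ : Fin n × Fin m → Complex)
    (hψ : ptraceSnd (outer ψ ψ) = ρ) (hφ : ptraceSnd (outer φ φ) = ξ) :
    traceNorm (ptraceFst (outer ψ φ)) = fidelity ρ ξ := by
  rw [← hψ, ← hφ, ptraceFst_outer, ptraceSnd_outer, ptraceSnd_outer]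
  exact traceNorm_transpose_conjTranspose_mul_eq_fidelity _ _

/-- For purifications ψ of ρ and φ of ξ, the trace norm of the partial trace over H of
the outer product |ψ⟩⟨φ| equals the fidelity F(ρ, ξ). -/
theorem traceNorm_ptrace_outer_eq_fidelity {n m : ℕ} (ρ ξ : Matrix (Fin n) (Fin n) Complex)
    (hρ : ρ.PosSemidef) (hρtr : ρ.trace = 1) (hξ : ξ.PosSemidef) (hξtr : ξ.trace = 1)
    (ψ φ : Fin n × Fin m → Complex)
    (hψ : ptraceSnd (outer ψ ψ) = ρ) (hφ : ptraceSnd (outer φ φ) = ξ) :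
    traceNorm (ptraceFst (outer ψ φ)) = fidelity ρ ξ :=
  traceNorm_ptrace_outer_eq_fidelity_general ρ ξ ψ φ hψ hφ
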